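/- Let G be a group acting on a topological space X by homeomorphisms. Suppose H is a subgroup of the homeomorphism group of X containing the image of G, and suppose there is a G-invariant dense subset D ⊆ X such that every h ∈ H preserves D and h|D equals g|D for some g ∈ G. If X has the property that continuous self-maps agreeing on D and preserving a homeomorphism-invariant height function with the separation property of Lemma 'separability' must agree everywhere, then every h ∈ H equals the action of some g ∈ G on all of X. -/
import Mathlib


open Filter

/-- `b` is unilaterally adherent to `a`: every open neighbourhood of `b` contains `a`. -/
def UnilaterallyAdherent {X : Type*} [TopologicalSpace X] (b a : X) : Prop :=
  ∀ U : Set X, IsOpen U → b ∈ U → a ∈ U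

/-- `a 0, a 1, …, a n` is an adherence tower: the points are pairwise distinct (it is an
ordered subset) and each `a j` (for `j ≤ n`) is unilaterally adherent to all earlier terms. -/
def IsAdherenceTower {X : Type*} [TopologicalSpace X] (n : ℕ) (a : ℕ → X) : Prop :=
  (∀ j k : ℕ, j ≤ n → k ≤ n → j ≠ k → a j ≠ a k) ∧
  ∀ j k : ℕ, k < j → j ≤ n → UnilaterallyAdherent (a j) (a k)

/-- The adherence height of `x`: the supremum (in `ℕ∞`) of the lengths of adherence towers
starting at `x`. -/
noncomputable def adhHeight {X : Type*} [TopologicalSpace X] (x : X) : ℕ∞ :=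
  sSup {N : ℕ∞ | ∃ n : ℕ, N = (n : ℕ∞) ∧ ∃ a : ℕ → X, a 0 = x ∧ IsAdherenceTower n a}

lemma adh_tower_map {X : Type*} [TopologicalSpace X] (e : X ≃ₜ X) {n : ℕ} {a : ℕ → X}
    (ht : IsAdherenceTower n a) : IsAdherenceTower n (e ∘ a) := by
  obtain ⟨h1, h2⟩ := ht
  refine ⟨fun j k hj hk hjk he => h1 j k hj hk hjk (e.injective he), ?_⟩
  intro j k hkj hj U hU hbU
  exact h2 j k hkj hj (e ⁻¹' U) (hU.preimage e.continuous) hbU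

lemma adhHeight_map {X : Type*} [TopologicalSpace X] (e : X ≃ₜ X) (x : X) :
    adhHeight (e x) = adhHeight x := by
  have key : ∀ (f : X ≃ₜ X) (y : X), adhHeight y ≤ adhHeight (f y) := by
    intro f y
    apply sSup_le_sSup
    rintro N ⟨n, rfl, a, ha0, ht⟩
    exact ⟨n, rfl, f ∘ a, by simp [ha0], adh_tower_map f ht⟩
  refine le_antisymm ?_ (key e x)
  have := key e.symm (e x)
  simpa using this

/-- Rigidity via a dense subset: suppose every point `b` of `X` is the limit of a sequence
in the invariant dense set `D` whose every other limit has strictly smaller adherence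
height.  If `h` is a homeomorphism of `X` preserving `D` and agreeing on `D` with the action
of some element of a group `G` acting on `X` by homeomorphisms, then `h` agrees with the
action of some `g ∈ G` on all of `X`. -/
theorem rigidity_from_dense_action {X : Type*} [TopologicalSpace X] {G : Type*} [Group G]
    (ρ : G → X ≃ₜ X) (hρ_one : ρ 1 = Homeomorph.refl X)
    (hρ_mul : ∀ g h : G, ρ (g * h) = (ρ h).trans (ρ g)) (D : Set X) (hD : Dense D)
    (hGD : ∀ (g : G), ∀ x ∈ D, ρ g x ∈ D)
    (hsep : ∀ b : X, ∃ a : ℕ → X, (∀ i, a i ∈ D) ∧ Tendsto a atTop (nhds b) ∧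
      ∀ d : X, Tendsto a atTop (nhds d) → d ≠ b → adhHeight d < adhHeight b)
    (h : X ≃ₜ X) (hhD : ∀ x ∈ D, h x ∈ D)
    (hagree : ∃ g : G, ∀ x ∈ D, h x = ρ g x) :
    ∃ g : G, ∀ x : X, h x = ρ g x := by
  obtain ⟨g, hg⟩ := hagree
  refine ⟨g, fun b => ?_⟩
  by_contra hne
  obtain ⟨a, haD, hab, huniq⟩ := hsep b
  have heq : ∀ i, h (a i) = ρ g (a i) := fun i => hg (a i) (haD i)
  have h1 : Tendsto (fun i => h (a i)) atTop (nhds (ρ g b)) := by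
    simp only [heq]
    exact ((ρ g).continuous.tendsto b).comp hab
  have h2 : Tendsto a atTop (nhds (h.symm (ρ g b))) := by
    have h3 := (h.symm.continuous.tendsto (ρ g b)).comp h1
    have h4 : (⇑h.symm ∘ fun i => h (a i)) = a := by ext i; simp
    rwa [h4] at h3
  have hkb : h.symm (ρ g b) ≠ b := by
    intro hkb
    have h5 : h (h.symm (ρ g b)) = h b := congrArg h hkb
    rw [h.apply_symm_apply] at h5
    exact hne h5.symm
  have hlt := huniq _ h2 hkb
  have heq2 : adhHeight (h.symm (ρ g b)) = adhHeight b := by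
    have h4 := adhHeight_map ((ρ g).trans h.symm) b
    simpa using h4
  rw [heq2] at hlt
  exact lt_irrefl _ hlt
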